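/- arXiv:1905.06263 — 5 statements merged into one kernel-verified Lean document; each statement's English description precedes it below -/
import Mathlib

section
/- Let f : ℝ^N → ℝ be differentiable with an L-Lipschitz gradient for some L > 0, i.e., ‖∇f(x) − ∇f(y)‖ ≤ L‖x − y‖ for all x, y ∈ ℝ^N. Let X ⊆ ℝ^N be nonempty, closed and convex, let x̄ ∈ X, let ε > 0 and g ∈ ℝ^N satisfy ‖g − ∇f(x̄)‖ ≤ ε, let β > 0, and set p = proj_X(x̄ − βg). Then f(p) ≤ f(x̄) − (1/β − L/2)·‖p − x̄‖² + ε·‖p − x̄‖. (Key inequality in the proof of Lemma 3.) -/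
open scoped RealInnerProductSpace

/-- Key inequality in the proof of Lemma 3: if `f` has an `L`-Lipschitz gradient,
`‖g − ∇f(x̄)‖ ≤ ε`, `β > 0` and `p = proj_X (x̄ − β g)`, then
`f(p) ≤ f(x̄) − (1/β − L/2) ‖p − x̄‖² + ε ‖p − x̄‖`. -/
theorem predictive_update_key_inequality {N : ℕ}
    (f : EuclideanSpace ℝ (Fin N) → ℝ) (L : ℝ) (hL : 0 < L)
    (hdiff : Differentiable ℝ f)
    (hLip : ∀ x y : EuclideanSpace ℝ (Fin N),
      ‖gradient f x - gradient f y‖ ≤ L * ‖x - y‖)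
    (X : Set (EuclideanSpace ℝ (Fin N)))
    (hXne : X.Nonempty) (hXcl : IsClosed X) (hXconv : Convex ℝ X)
    (xbar : EuclideanSpace ℝ (Fin N)) (hxbar : xbar ∈ X)
    (ε : ℝ) (hε : 0 < ε) (g : EuclideanSpace ℝ (Fin N))
    (hest : ‖g - gradient f xbar‖ ≤ ε)
    (β : ℝ) (hβ : 0 < β)
    (p : EuclideanSpace ℝ (Fin N)) (hpmem : p ∈ X)
    (hpproj : ∀ y ∈ X, ‖(xbar - β • g) - p‖ ≤ ‖(xbar - β • g) - y‖) :
    f p ≤ f xbar - (1 / β - L / 2) * ‖p - xbar‖ ^ 2 + ε * ‖p - xbar‖ := by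
  set d : EuclideanSpace ℝ (Fin N) := p - xbar with hd
  set u : EuclideanSpace ℝ (Fin N) := xbar - β • g with hu
  -- variational inequality
  haveI : Nonempty X := hXne.to_subtype
  have heq : ‖u - p‖ = ⨅ w : X, ‖u - w‖ := by
    refine le_antisymm (le_ciInf fun w => hpproj w w.2) ?_
    exact ciInf_le ⟨0, by rintro r ⟨w, rfl⟩; exact norm_nonneg _⟩ (⟨p, hpmem⟩ : X)
  have hvar : ⟪u - p, xbar - p⟫ ≤ 0 :=
    (norm_eq_iInf_iff_real_inner_le_zero hXconv hpmem).1 heq xbar hxbar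
  have hgd : ⟪g, d⟫ ≤ -(1 / β) * ‖d‖ ^ 2 := by
    have hexp : ⟪u - p, xbar - p⟫ = ‖d‖ ^ 2 + β * ⟪g, d⟫ := by
      rw [hu, hd]
      have : xbar - β • g - p = (xbar - p) - β • g := by abel
      rw [this, inner_sub_left, real_inner_smul_left]
      have h1 : (xbar - p : EuclideanSpace ℝ (Fin N)) = -(p - xbar) := by abel
      rw [h1, inner_neg_neg, real_inner_self_eq_norm_sq, inner_neg_right]
      ring
    have hle : ‖d‖ ^ 2 + β * ⟪g, d⟫ ≤ 0 := hexp ▸ hvar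
    have h2 : ⟪g, d⟫ ≤ -‖d‖ ^ 2 / β := by rw [le_div_iff₀ hβ]; nlinarith
    have h3 : -(1 / β) * ‖d‖ ^ 2 = -‖d‖ ^ 2 / β := by ring
    linarith
  -- descent lemma
  have hdesc : f p ≤ f xbar + ⟪gradient f xbar, d⟫ + L / 2 * ‖d‖ ^ 2 := by
    set φ : ℝ → ℝ := fun t =>
      f (xbar + t • d) - t * ⟪gradient f xbar, d⟫ - t ^ 2 * (L / 2 * ‖d‖ ^ 2) with hφ
    have hc : ∀ t : ℝ, HasDerivAt (fun t : ℝ => xbar + t • d) d t := fun t => by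
      simpa using ((hasDerivAt_id t).smul_const d).const_add xbar
    have hφ' : ∀ t : ℝ, HasDerivAt φ
        (⟪gradient f (xbar + t • d), d⟫ - ⟪gradient f xbar, d⟫
          - (2 * t) * (L / 2 * ‖d‖ ^ 2)) t := by
      intro t
      have h1 : HasDerivAt (fun t : ℝ => f (xbar + t • d))
          ⟪gradient f (xbar + t • d), d⟫ t := by
        have := ((hdiff (xbar + t • d)).hasGradientAt.hasFDerivAt).comp_hasDerivAt t (hc t)
        simpa [InnerProductSpace.toDual_apply_apply, Function.comp_def] using this
      have h2 : HasDerivAt (fun t : ℝ => t * ⟪gradient f xbar, d⟫)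
          ⟪gradient f xbar, d⟫ t := by
        simpa using (hasDerivAt_id t).mul_const ⟪gradient f xbar, d⟫
      have h3 : HasDerivAt (fun t : ℝ => t ^ 2 * (L / 2 * ‖d‖ ^ 2))
          ((2 * t) * (L / 2 * ‖d‖ ^ 2)) t := by
        simpa using (hasDerivAt_pow 2 t).mul_const (L / 2 * ‖d‖ ^ 2)
      exact (h1.sub h2).sub h3
    have hanti : AntitoneOn φ (Set.Icc 0 1) := by
      apply antitoneOn_of_deriv_nonpos (convex_Icc 0 1)
      · exact fun t _ => (hφ' t).continuousAt.continuousWithinAt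
      · intro t ht
        exact (hφ' t).differentiableAt.differentiableWithinAt
      · intro t ht
        rw [interior_Icc] at ht
        rw [(hφ' t).deriv]
        have hb : ⟪gradient f (xbar + t • d) - gradient f xbar, d⟫ ≤ (2 * t) * (L / 2 * ‖d‖ ^ 2) := by
          calc ⟪gradient f (xbar + t • d) - gradient f xbar, d⟫
              ≤ ‖gradient f (xbar + t • d) - gradient f xbar‖ * ‖d‖ := real_inner_le_norm _ _
            _ ≤ (L * ‖(xbar + t • d) - xbar‖) * ‖d‖ := by
                have := hLip (xbar + t • d) xbar
                nlinarith [norm_nonneg d, this, norm_nonneg (gradient f (xbar + t • d) - gradient f xbar)]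
            _ = (2 * t) * (L / 2 * ‖d‖ ^ 2) := by
                have : (xbar + t • d) - xbar = t • d := by abel
                rw [this, norm_smul, Real.norm_eq_abs, abs_of_pos ht.1]
                ring
        rw [inner_sub_left] at hb
        linarith
    have h01 := hanti (Set.left_mem_Icc.2 zero_le_one) (Set.right_mem_Icc.2 zero_le_one) zero_le_one
    simp only [hφ, zero_smul, add_zero, one_smul, zero_mul, sub_zero, one_pow, one_mul,
      zero_pow] at h01
    have hpd : xbar + d = p := by rw [hd]; abel
    rw [hpd] at h01
    linarith
  -- combine
  have hsplit : ⟪gradient f xbar, d⟫ = ⟪g, d⟫ + ⟪gradient f xbar - g, d⟫ := by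
    rw [inner_sub_left]; ring
  have herr : ⟪gradient f xbar - g, d⟫ ≤ ε * ‖d‖ := by
    calc ⟪gradient f xbar - g, d⟫ ≤ ‖gradient f xbar - g‖ * ‖d‖ := real_inner_le_norm _ _
      _ ≤ ε * ‖d‖ := by
          have : ‖gradient f xbar - g‖ = ‖g - gradient f xbar‖ := by rw [norm_sub_rev]
          nlinarith [norm_nonneg d, this ▸ hest]
  have hβ' : -(1 / β) * ‖d‖ ^ 2 = -(1 / β * ‖d‖ ^ 2) := by ring
  nlinarith [hdesc, hgd, herr, hsplit]
end

section
/- Let f : ℝ^N → ℝ be differentiable with an L-Lipschitz gradient for some L > 0, i.e., ‖∇f(x) − ∇f(y)‖ ≤ L‖x − y‖ for all x, y ∈ ℝ^N. Let X ⊆ ℝ^N be nonempty, closed and convex, let x̄ ∈ X, let ε > 0 and g ∈ ℝ^N satisfy ‖g − ∇f(x̄)‖ ≤ ε and ‖g‖ > ε, let 0 < β ≤ 1/L, and set p = proj_X(x̄ − βg). If δ > 0 and ‖p − x̄‖ ≥ ε/L + √(ε²/L² + 2δ/L), then f(p) ≤ f(x̄) − δ; that is, the predictive update with fixed step size strictly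 improves on the point x̄ by at least δ. (Lemma 3, predictive update with fixed step size.) -/
set_option maxHeartbeats 1000000

open scoped RealInnerProductSpace

/-- Descent lemma: if the gradient of `f` is `L`-Lipschitz, then
`f y ≤ f x + ⟪∇f x, y - x⟫ + L/2 ‖y - x‖²`. -/
lemma descent_lemma_aux {N : ℕ}
    (f : EuclideanSpace ℝ (Fin N) → ℝ) (L : ℝ) (hL : 0 < L)
    (hdiff : Differentiable ℝ f)
    (hLip : ∀ x y : EuclideanSpace ℝ (Fin N),
      ‖gradient f x - gradient f y‖ ≤ L * ‖x - y‖)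
    (x y : EuclideanSpace ℝ (Fin N)) :
    f y ≤ f x + ⟪gradient f x, y - x⟫ + L / 2 * ‖y - x‖ ^ 2 := by
  set v := y - x with hv
  have hline : ∀ t : ℝ, HasDerivAt (fun t : ℝ => x + t • v) v t := by
    intro t
    have h1 : HasDerivAt (fun t : ℝ => t • v) v t := by
      simpa using (hasDerivAt_id t).smul_const v
    simpa using h1.const_add x
  have hφ : ∀ t : ℝ, HasDerivAt (fun t : ℝ => f (x + t • v))
      ⟪gradient f (x + t • v), v⟫ t := by
    intro t
    have hf := (hdiff (x + t • v)).hasGradientAt.hasFDerivAt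
    have := hf.comp_hasDerivAt t (hline t)
    simpa [InnerProductSpace.toDual_apply_apply, Function.comp_def] using this
  have hgradLip : LipschitzWith (Real.toNNReal L) (gradient f) := by
    apply LipschitzWith.of_dist_le_mul
    intro a b
    have := hLip a b
    simpa [dist_eq_norm, Real.coe_toNNReal L hL.le] using this
  have hcont : Continuous fun t : ℝ => ⟪gradient f (x + t • v), v⟫ := by
    apply Continuous.inner _ continuous_const
    exact hgradLip.continuous.comp (by continuity)
  have hFTC : ∫ t in (0:ℝ)..1, ⟪gradient f (x + t • v), v⟫
      = f (x + (1:ℝ) • v) - f (x + (0:ℝ) • v) :=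
    intervalIntegral.integral_eq_sub_of_hasDerivAt (fun t _ => hφ t)
      (hcont.intervalIntegrable 0 1)
  have hxy1 : x + (1:ℝ) • v = y := by simp [hv]
  have hxy0 : x + (0:ℝ) • v = x := by simp
  rw [hxy1, hxy0] at hFTC
  -- bound the integrand
  have hbdd : ∀ t ∈ Set.Icc (0:ℝ) 1,
      ⟪gradient f (x + t • v), v⟫ ≤ ⟪gradient f x, v⟫ + L * ‖v‖ ^ 2 * t := by
    intro t ht
    have h1 : ⟪gradient f (x + t • v), v⟫ - ⟪gradient f x, v⟫
        = ⟪gradient f (x + t • v) - gradient f x, v⟫ := by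
      rw [inner_sub_left]
    have h2 : ⟪gradient f (x + t • v) - gradient f x, v⟫
        ≤ ‖gradient f (x + t • v) - gradient f x‖ * ‖v‖ := real_inner_le_norm _ _
    have h3 : ‖gradient f (x + t • v) - gradient f x‖ ≤ L * ‖t • v‖ := by
      simpa using hLip (x + t • v) x
    have h4 : ‖t • v‖ = t * ‖v‖ := by
      rw [norm_smul, Real.norm_eq_abs, abs_of_nonneg ht.1]
    rw [h4] at h3
    nlinarith [mul_le_mul_of_nonneg_right h3 (norm_nonneg v)]
  have hint1 : IntervalIntegrable (fun t : ℝ => ⟪gradient f (x + t • v), v⟫)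
      MeasureTheory.volume 0 1 := hcont.intervalIntegrable 0 1
  have hint2 : IntervalIntegrable (fun t : ℝ => ⟪gradient f x, v⟫ + L * ‖v‖ ^ 2 * t)
      MeasureTheory.volume 0 1 :=
    (by fun_prop : Continuous fun t : ℝ => ⟪gradient f x, v⟫ + L * ‖v‖ ^ 2 * t).intervalIntegrable 0 1
  have hmono := intervalIntegral.integral_mono_on (by norm_num : (0:ℝ) ≤ 1) hint1 hint2 hbdd
  have hval : ∫ t in (0:ℝ)..1, (⟪gradient f x, v⟫ + L * ‖v‖ ^ 2 * t)
      = ⟪gradient f x, v⟫ + L / 2 * ‖v‖ ^ 2 := by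
    rw [intervalIntegral.integral_add (intervalIntegrable_const)
      ((by fun_prop : Continuous fun t : ℝ => L * ‖v‖ ^ 2 * t).intervalIntegrable 0 1)]
    rw [intervalIntegral.integral_const_mul, integral_id]
    simp; ring
  rw [hFTC, hval] at hmono
  linarith

/-- Lemma 3 (predictive update with fixed step size): if `f` has an `L`-Lipschitz gradient,
`‖g − ∇f(x̄)‖ ≤ ε`, `‖g‖ > ε`, `0 < β ≤ 1/L`, `p = proj_X (x̄ − β g)`, `δ > 0` and
`‖p − x̄‖ ≥ ε/L + √(ε²/L² + 2δ/L)`, then `f(p) ≤ f(x̄) − δ`. -/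
theorem predictive_update_fixed_step_size {N : ℕ}
    (f : EuclideanSpace ℝ (Fin N) → ℝ) (L : ℝ) (hL : 0 < L)
    (hdiff : Differentiable ℝ f)
    (hLip : ∀ x y : EuclideanSpace ℝ (Fin N),
      ‖gradient f x - gradient f y‖ ≤ L * ‖x - y‖)
    (X : Set (EuclideanSpace ℝ (Fin N)))
    (hXne : X.Nonempty) (hXcl : IsClosed X) (hXconv : Convex ℝ X)
    (xbar : EuclideanSpace ℝ (Fin N)) (hxbar : xbar ∈ X)
    (ε : ℝ) (hε : 0 < ε) (g : EuclideanSpace ℝ (Fin N))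
    (hest : ‖g - gradient f xbar‖ ≤ ε) (hg : ε < ‖g‖)
    (β : ℝ) (hβ0 : 0 < β) (hβL : β ≤ 1 / L)
    (p : EuclideanSpace ℝ (Fin N)) (hpmem : p ∈ X)
    (hpproj : ∀ y ∈ X, ‖(xbar - β • g) - p‖ ≤ ‖(xbar - β • g) - y‖)
    (δ : ℝ) (hδ : 0 < δ)
    (hdir : ε / L + Real.sqrt (ε ^ 2 / L ^ 2 + 2 * δ / L) ≤ ‖p - xbar‖) :
    f p ≤ f xbar - δ := by
  set u := xbar - β • g with hu
  -- variational inequality for the projection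
  haveI : Nonempty ↑X := hXne.to_subtype
  have hinf : ‖u - p‖ = ⨅ w : X, ‖u - w‖ := by
    refine le_antisymm (le_ciInf fun w => hpproj w w.2) ?_
    exact ciInf_le ⟨0, by rintro _ ⟨w, rfl⟩; positivity⟩ (⟨p, hpmem⟩ : X)
  have hVI : ∀ w ∈ X, ⟪u - p, w - p⟫ ≤ 0 :=
    (norm_eq_iInf_iff_real_inner_le_zero hXconv hpmem).mp hinf
  have hVIx := hVI xbar hxbar
  set t := ‖p - xbar‖ with htdef
  -- from VI: ‖xbar - p‖² ≤ β ⟪g, xbar - p⟫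
  have hexp : ⟪u - p, xbar - p⟫ = ‖xbar - p‖ ^ 2 - β * ⟪g, xbar - p⟫ := by
    rw [hu]
    have : xbar - β • g - p = (xbar - p) - β • g := by abel
    rw [this, inner_sub_left, real_inner_smul_left, real_inner_self_eq_norm_sq]
  have hkey1 : ‖xbar - p‖ ^ 2 ≤ β * ⟪g, xbar - p⟫ := by
    rw [hexp] at hVIx; linarith
  have hnormsym : ‖xbar - p‖ = t := by rw [htdef, norm_sub_rev]
  -- gradient inner product bound
  have hinner : ⟪gradient f xbar, p - xbar⟫ ≤ -(1 / β) * t ^ 2 + ε * t := by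
    have h1 : ⟪gradient f xbar, p - xbar⟫
        = ⟪g, p - xbar⟫ + ⟪gradient f xbar - g, p - xbar⟫ := by
      rw [← inner_add_left]
      congr 1
      abel
    have h2 : ⟪g, p - xbar⟫ = - ⟪g, xbar - p⟫ := by
      rw [← inner_neg_right]; congr 1; abel
    have h3 : ⟪gradient f xbar - g, p - xbar⟫ ≤ ε * t := by
      calc ⟪gradient f xbar - g, p - xbar⟫ ≤ ‖gradient f xbar - g‖ * ‖p - xbar‖ :=
            real_inner_le_norm _ _
        _ ≤ ε * t := by
            apply mul_le_mul_of_nonneg_right _ (norm_nonneg _)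
            rwa [norm_sub_rev]
    have h4 : ⟪g, xbar - p⟫ ≥ t ^ 2 / β := by
      rw [ge_iff_le, div_le_iff₀ hβ0, ← hnormsym] at *
      nlinarith [hkey1]
    rw [h1, h2]
    have : -(1 / β) * t ^ 2 = -(t ^ 2 / β) := by ring
    linarith
  -- descent lemma
  have hdesc := descent_lemma_aux f L hL hdiff hLip xbar p
  rw [← htdef] at hdesc
  -- β ≤ 1/L gives L ≤ 1/β
  have hβinv : L ≤ 1 / β := by
    rw [le_div_iff₀ hβ0]
    calc L * β ≤ L * (1 / L) := by nlinarith
      _ = 1 := by field_simp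
  -- arithmetic conclusion
  set s := Real.sqrt (ε ^ 2 / L ^ 2 + 2 * δ / L) with hsdef
  have hs0 : 0 ≤ s := Real.sqrt_nonneg _
  have hs2 : s ^ 2 = ε ^ 2 / L ^ 2 + 2 * δ / L := by
    rw [hsdef, Real.sq_sqrt]; positivity
  have ht0 : 0 ≤ t := norm_nonneg _
  have hquad : L / 2 * t ^ 2 - ε * t - δ ≥ 0 := by
    have hst : s ≤ t - ε / L := by
      have : ε / L + s ≤ t := hdir
      linarith
    have hsq : s * s ≤ (t - ε / L) * (t - ε / L) :=
      mul_self_le_mul_self hs0 hst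
    have h7 : ε ^ 2 / L ^ 2 + 2 * δ / L ≤ (t - ε / L) ^ 2 := by nlinarith [hsq, hs2]
    have h8 := mul_le_mul_of_nonneg_left h7 hL.le
    have e1 : L * (ε ^ 2 / L ^ 2 + 2 * δ / L) = ε ^ 2 / L + 2 * δ := by
      field_simp
    have e2 : L * (t - ε / L) ^ 2 = L * t ^ 2 - 2 * ε * t + ε ^ 2 / L := by
      field_simp; ring
    rw [e1, e2] at h8
    linarith
  have hfinal : -(1 / β) * t ^ 2 + ε * t + L / 2 * t ^ 2 ≤ -δ := by
    nlinarith [sq_nonneg t, mul_le_mul_of_nonneg_right hβinv (sq_nonneg t)]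
  linarith
end

section
/- Let f_t, f_{t+1} : ℝ^N → ℝ with f_{t+1} differentiable, and let Δ > 0 satisfy |f_t(y) − f_{t+1}(y)| ≤ Δ for every y ∈ ℝ^N. Let x̄, d ∈ ℝ^N, let ε > 0 and g ∈ ℝ^N satisfy ‖g − ∇f_{t+1}(x̄)‖ ≤ ε, and let β > 0. If the online modified Armijo condition f_t(x̄ + β·d) ≤ f_t(x̄) + β·(⟪g, d⟫ − ε‖d‖) − 2Δ holds, then the modified Armijo condition on the next round's loss holds: f_{t+1}(x̄ + β·d) ≤ f_{t+1}(x̄) + β·⟪∇f_{t+1}(x̄), d⟫. (Lemma 4, sufficient decrease of the predictive update with backtracking line search.) -/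
open scoped RealInnerProductSpace

/-- Lemma 4 (sufficient decrease of the predictive update with backtracking line search):
if `|f_t(y) − f_{t+1}(y)| ≤ Δ` for every `y`, `‖g − ∇f_{t+1}(x̄)‖ ≤ ε`, `β > 0`, and the
online modified Armijo condition
`f_t(x̄ + β d) ≤ f_t(x̄) + β (⟪g, d⟫ − ε ‖d‖) − 2Δ` holds, then the modified Armijo
condition on the next round's loss holds:
`f_{t+1}(x̄ + β d) ≤ f_{t+1}(x̄) + β ⟪∇f_{t+1}(x̄), d⟫`. -/
theorem pocob_sufficient_decrease {N : ℕ}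
    (ft ftnext : EuclideanSpace ℝ (Fin N) → ℝ)
    (hdiff : Differentiable ℝ ftnext)
    (Δ : ℝ) (hΔ : 0 < Δ)
    (htime : ∀ y : EuclideanSpace ℝ (Fin N), |ft y - ftnext y| ≤ Δ)
    (xbar d : EuclideanSpace ℝ (Fin N))
    (ε : ℝ) (hε : 0 < ε) (g : EuclideanSpace ℝ (Fin N))
    (hest : ‖g - gradient ftnext xbar‖ ≤ ε)
    (β : ℝ) (hβ : 0 < β)
    (harmijo : ft (xbar + β • d) ≤ ft xbar + β * (⟪g, d⟫ - ε * ‖d‖) - 2 * Δ) :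
    ftnext (xbar + β • d) ≤ ftnext xbar + β * ⟪gradient ftnext xbar, d⟫ := by
  have h1 := abs_le.1 (htime (xbar + β • d))
  have h2 := abs_le.1 (htime xbar)
  have hCS : ⟪g - gradient ftnext xbar, d⟫ ≤ ε * ‖d‖ := by
    calc ⟪g - gradient ftnext xbar, d⟫ ≤ ‖g - gradient ftnext xbar‖ * ‖d‖ :=
          real_inner_le_norm _ _
      _ ≤ ε * ‖d‖ := by
          exact mul_le_mul_of_nonneg_right hest (norm_nonneg _)
  have hinner : ⟪g, d⟫ - ε * ‖d‖ ≤ ⟪gradient ftnext xbar, d⟫ := by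
    have := inner_sub_left (𝕜 := ℝ) g (gradient ftnext xbar) d
    linarith [hCS, this]
  have hmul : β * (⟪g, d⟫ - ε * ‖d‖) ≤ β * ⟪gradient ftnext xbar, d⟫ :=
    mul_le_mul_of_nonneg_left hinner hβ.le
  linarith [h1.2, h2.1]
end

section
/- Let X ⊆ ℝ^N be a nonempty closed convex set, let x̄ ∈ X, ζ > 0 and g ∈ ℝ^N, and set d = proj_X(x̄ − ζg) − x̄ with d ≠ 0. Let f_t : ℝ^N → ℝ, let ε > 0 and Δ > 0, and suppose β ∈ (0,1] satisfies the online modified Armijo condition f_t(x̄ + β·d) ≤ f_t(x̄) + β·⟪g, d⟫ − β·ε‖d‖ − 2Δ. Then the updated point x̄ + β·d lies in X and f_t(x̄) − f_t(x̄ + β·d) > 2Δ; that is, the predictive update with backtracking line search improves on the OCO update by more than 2Δ. (Corollary 2, POCOb update improvement; this is the 'if' direction of Theorem 2.) -/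
set_option maxHeartbeats 1000000


open scoped RealInnerProductSpace

/-- Corollary 2 (POCOb update improvement): with `X` nonempty closed convex, `x̄ ∈ X`,
`d = proj_X(x̄ − ζ g) − x̄ ≠ 0`, and `β ∈ (0,1]` satisfying the online modified Armijo
condition `f_t(x̄ + β d) ≤ f_t(x̄) + β ⟪g, d⟫ − β ε ‖d‖ − 2Δ`, the updated point
`x̄ + β d` lies in `X` and `f_t(x̄) − f_t(x̄ + β d) > 2Δ`. -/
theorem pocob_update_improvement {N : ℕ}
    (X : Set (EuclideanSpace ℝ (Fin N)))
    (hXne : X.Nonempty) (hXcl : IsClosed X) (hXconv : Convex ℝ X)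
    (xbar : EuclideanSpace ℝ (Fin N)) (hxbar : xbar ∈ X)
    (ζ : ℝ) (hζ : 0 < ζ) (g : EuclideanSpace ℝ (Fin N))
    (p : EuclideanSpace ℝ (Fin N)) (hpmem : p ∈ X)
    (hpproj : ∀ y ∈ X, ‖(xbar - ζ • g) - p‖ ≤ ‖(xbar - ζ • g) - y‖)
    (d : EuclideanSpace ℝ (Fin N)) (hd : d = p - xbar) (hdne : d ≠ 0)
    (ft : EuclideanSpace ℝ (Fin N) → ℝ)
    (ε : ℝ) (hε : 0 < ε) (Δ : ℝ) (hΔ : 0 < Δ)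
    (β : ℝ) (hβ : β ∈ Set.Ioc (0 : ℝ) 1)
    (harmijo : ft (xbar + β • d) ≤ ft xbar + β * ⟪g, d⟫ - β * ε * ‖d‖ - 2 * Δ) :
    xbar + β • d ∈ X ∧ 2 * Δ < ft xbar - ft (xbar + β • d) := by
  obtain ⟨hβ0, hβ1⟩ := hβ
  have hmem : xbar + β • d ∈ X := by
    have : xbar + β • d = (1 - β) • xbar + β • p := by
      rw [hd]; module
    rw [this]
    exact hXconv hxbar hpmem (by linarith) (le_of_lt hβ0) (by ring)
  refine ⟨hmem, ?_⟩
  -- variational inequality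
  set u := xbar - ζ • g with hu
  have hinf : ‖u - p‖ = ⨅ w : X, ‖u - w‖ := by
    haveI : Nonempty X := ⟨⟨p, hpmem⟩⟩
    have hbdd : BddBelow (Set.range fun w : X => ‖u - w‖) :=
      ⟨0, Set.forall_mem_range.2 fun _ => norm_nonneg _⟩
    exact le_antisymm (le_ciInf fun w => hpproj w w.2) (ciInf_le hbdd ⟨p, hpmem⟩)
  have hvar := (norm_eq_iInf_iff_real_inner_le_zero hXconv hpmem).1 hinf xbar hxbar
  -- u - p = -ζ•g - d, xbar - p = -d
  have h1 : u - p = -(ζ • g) - d := by rw [hu, hd]; module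
  have h2 : xbar - p = -d := by rw [hd]; module
  rw [h1, h2] at hvar
  have hexp : ⟪-(ζ • g) - d, -d⟫ = ζ * ⟪g, d⟫ + ‖d‖ ^ 2 := by
    rw [inner_sub_left, inner_neg_neg, inner_neg_right, real_inner_smul_left,
      real_inner_self_eq_norm_sq]
    ring
  rw [hexp] at hvar
  have hdpos : (0:ℝ) < ‖d‖ := norm_pos_iff.mpr hdne
  have hgd : ⟪g, d⟫ ≤ 0 := by nlinarith [sq_nonneg ‖d‖]
  nlinarith [mul_pos hβ0 hdpos, mul_nonneg (le_of_lt hβ0) (neg_nonneg.mpr hgd)]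
end

section
/- Let X ⊆ ℝ^N be a nonempty closed convex set, let f : ℝ^N → ℝ be differentiable at x̄ ∈ X, let ε > 0 and g ∈ ℝ^N satisfy ‖g − ∇f(x̄)‖ ≤ ε, let β > 0, and set p = proj_X(x̄ − βg). Then ⟪∇f(x̄), p − x̄⟫ ≤ −(1/β)‖p − x̄‖² + ε‖p − x̄‖. In particular, if ‖p − x̄‖ > β·ε, then ⟪∇f(x̄), p − x̄⟫ < 0, so p − x̄ is a feasible descent direction for the true loss f at x̄. (Claim combining Lemmas 1 and 2: the estimated gradient projection step is a descent direction of the actual loss.) -/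
open scoped RealInnerProductSpace

/-- Combination of Lemmas 1 and 2: with `X` nonempty closed convex, `f` differentiable at
`x̄ ∈ X`, `‖g − ∇f(x̄)‖ ≤ ε`, `β > 0` and `p = proj_X(x̄ − β g)`, one has
`⟪∇f(x̄), p − x̄⟫ ≤ −(1/β) ‖p − x̄‖² + ε ‖p − x̄‖`; in particular, if `‖p − x̄‖ > β ε`
then `⟪∇f(x̄), p − x̄⟫ < 0`. -/
theorem estimated_projection_descent_direction {N : ℕ}
    (X : Set (EuclideanSpace ℝ (Fin N)))
    (hXne : X.Nonempty) (hXcl : IsClosed X) (hXconv : Convex ℝ X)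
    (f : EuclideanSpace ℝ (Fin N) → ℝ)
    (xbar : EuclideanSpace ℝ (Fin N)) (hxbar : xbar ∈ X)
    (hdiff : DifferentiableAt ℝ f xbar)
    (ε : ℝ) (hε : 0 < ε) (g : EuclideanSpace ℝ (Fin N))
    (hest : ‖g - gradient f xbar‖ ≤ ε)
    (β : ℝ) (hβ : 0 < β)
    (p : EuclideanSpace ℝ (Fin N)) (hpmem : p ∈ X)
    (hpproj : ∀ y ∈ X, ‖(xbar - β • g) - p‖ ≤ ‖(xbar - β • g) - y‖) :
    ⟪gradient f xbar, p - xbar⟫ ≤ -(1 / β) * ‖p - xbar‖ ^ 2 + ε * ‖p - xbar‖ ∧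
      (β * ε < ‖p - xbar‖ → ⟪gradient f xbar, p - xbar⟫ < 0) := by
  set u := xbar - β • g with hu
  -- variational inequality
  haveI : Nonempty X := hXne.to_subtype
  have hinf : ‖u - p‖ = ⨅ w : X, ‖u - w‖ := by
    refine le_antisymm (le_ciInf fun w => hpproj w w.2) ?_
    exact ciInf_le ⟨0, fun x hx => by rcases hx with ⟨w, rfl⟩; positivity⟩ (⟨p, hpmem⟩ : X)
  have hvar := (norm_eq_iInf_iff_real_inner_le_zero hXconv hpmem).mp hinf
  have hkey : ⟪u - p, xbar - p⟫ ≤ 0 := hvar xbar hxbar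
  set d := p - xbar with hd
  have h1 : ⟪g, d⟫ ≤ -(1 / β) * ‖d‖ ^ 2 := by
    have hexp : ⟪u - p, xbar - p⟫ = ‖d‖ ^ 2 + β * ⟪g, d⟫ := by
      have hup : u - p = -d - β • g := by rw [hu, hd]; abel
      have hxp : xbar - p = -d := by rw [hd]; abel
      rw [hup, hxp, inner_sub_left, inner_neg_neg, inner_neg_right,
        real_inner_smul_left, real_inner_self_eq_norm_sq]
      ring
    rw [hexp] at hkey
    rw [show -(1 / β) * ‖d‖ ^ 2 = -‖d‖ ^ 2 / β by ring, le_div_iff₀ hβ]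
    nlinarith [hkey]
  have h2 : ⟪gradient f xbar - g, d⟫ ≤ ε * ‖d‖ := by
    calc ⟪gradient f xbar - g, d⟫ ≤ ‖gradient f xbar - g‖ * ‖d‖ :=
          real_inner_le_norm _ _
      _ ≤ ε * ‖d‖ := by
          apply mul_le_mul_of_nonneg_right _ (norm_nonneg _)
          rwa [← norm_neg, neg_sub] at hest
  have hmain : ⟪gradient f xbar, d⟫ ≤ -(1 / β) * ‖d‖ ^ 2 + ε * ‖d‖ := by
    have : ⟪gradient f xbar, d⟫ = ⟪g, d⟫ + ⟪gradient f xbar - g, d⟫ := by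
      rw [inner_sub_left]; ring
    rw [this]; linarith
  refine ⟨hmain, fun hlt => ?_⟩
  have hdpos : 0 < ‖d‖ := lt_trans (by positivity) hlt
  have h3 : ε * ‖d‖ < (1 / β) * ‖d‖ ^ 2 := by
    have h4 := mul_lt_mul_of_pos_left hlt hdpos
    rw [show (1 / β) * ‖d‖ ^ 2 = (‖d‖ * ‖d‖) / β by ring, lt_div_iff₀ hβ]
    nlinarith
  linarith
end
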